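/- arXiv:1601.06265 — 3 statements merged into one kernel-verified Lean document; each statement's English description precedes it below -/
import Mathlib

section
/- Let b, b̃ : ℝ → ℝ be smooth with b(0)=b'(0)=b''(0)=0, b̃(0)=b̃'(0)=b̃''(0)=0, let z, z̃ be smooth functions of two variables with z_{yy}(0,0) > 0, z̃_{yy}(0,0) > 0, and suppose ε₁, ε₂ ∈ {±1} satisfy, for all (x,y) near 0: ε₁ x = x̃, ε₂(xy + b(y)) = ε₁ x ỹ + b̃(ỹ), ε₁ε₂ z(x,y) = z̃(x̃, ỹ), where (x̃,ỹ) is a coordinate change with positive Jacobian at the origin mapping (x,y) to (ε₁x, ε₁ε₂ y). Then ε₁ = ε₂ = 1, and consequently b = b̃ near 0 and z = z̃ near the origin. -/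
open scoped Topology

/-- Uniqueness step for West's normal form of a cross cap: if two normal forms
`(x, xy + b(y), z(x,y))` and `(x̃, x̃ỹ + b̃(ỹ), z̃(x̃,ỹ))` with
`b(0)=b'(0)=b''(0)=0`, `b̃(0)=b̃'(0)=b̃''(0)=0`, `z_{yy}(0,0) > 0`, `z̃_{yy}(0,0) > 0`
are related near the origin by signs `ε₁, ε₂ ∈ {±1}` via `x̃ = ε₁x`, `ỹ = ε₁ε₂y`,
`ε₂(xy + b(y)) = ε₁x·ỹ + b̃(ỹ)`, `ε₁ε₂·z(x,y) = z̃(x̃,ỹ)`, and the coordinate change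
`(x,y) ↦ (ε₁x, ε₁ε₂y)` has positive Jacobian, then `ε₁ = ε₂ = 1`, `b = b̃` near `0`,
and `z = z̃` near the origin. -/
theorem cross_cap_normal_form_uniqueness
    (b bt : ℝ → ℝ) (z zt : ℝ → ℝ → ℝ)
    (hb : ContDiff ℝ (⊤ : ℕ∞) b) (hbt : ContDiff ℝ (⊤ : ℕ∞) bt)
    (hz : ContDiff ℝ (⊤ : ℕ∞) (fun p : ℝ × ℝ => z p.1 p.2))
    (hzt : ContDiff ℝ (⊤ : ℕ∞) (fun p : ℝ × ℝ => zt p.1 p.2))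
    (hb0 : b 0 = 0) (hb1 : deriv b 0 = 0) (hb2 : deriv (deriv b) 0 = 0)
    (hbt0 : bt 0 = 0) (hbt1 : deriv bt 0 = 0) (hbt2 : deriv (deriv bt) 0 = 0)
    (hzyy : 0 < deriv (deriv (z 0)) 0) (hztyy : 0 < deriv (deriv (zt 0)) 0)
    (e1 e2 : ℝ) (he1 : e1 = 1 ∨ e1 = -1) (he2 : e2 = 1 ∨ e2 = -1)
    (hJ : 0 < e1 * (e1 * e2))
    (heq : ∀ᶠ p : ℝ × ℝ in 𝓝 0,
      e2 * (p.1 * p.2 + b p.2) = e1 * p.1 * (e1 * e2 * p.2) + bt (e1 * e2 * p.2) ∧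
      e1 * e2 * z p.1 p.2 = zt (e1 * p.1) (e1 * e2 * p.2)) :
    e1 = 1 ∧ e2 = 1 ∧ (∀ᶠ t in 𝓝 (0 : ℝ), b t = bt t) ∧
      (∀ᶠ p : ℝ × ℝ in 𝓝 0, z p.1 p.2 = zt p.1 p.2) := by
  have he1sq : e1 * e1 = 1 := by rcases he1 with h | h <;> rw [h] <;> norm_num
  have he2' : e2 = 1 := by
    rcases he2 with h | h
    · exact h
    · exfalso; rw [h] at hJ; nlinarith
  subst he2'
  -- restriction to the line x = 0
  have hc : Filter.Tendsto (fun y : ℝ => ((0 : ℝ), y)) (𝓝 0) (𝓝 (0 : ℝ × ℝ)) := by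
    have : Continuous (fun y : ℝ => ((0 : ℝ), y)) := continuous_const.prodMk continuous_id
    exact this.tendsto 0
  have hline : ∀ᶠ y in 𝓝 (0 : ℝ), e1 * z 0 y = zt 0 (e1 * y) :=
    (hc.eventually heq).mono fun y hy => by simpa using hy.2
  have he1' : e1 = 1 := by
    rcases he1 with h | h
    · exact h
    · exfalso
      subst h
      have hE : (fun y : ℝ => -(z 0 y)) =ᶠ[𝓝 (0 : ℝ)] fun y => zt 0 (-y) :=
        hline.mono fun y hy => by simpa using hy
      have key : deriv (deriv (fun y : ℝ => -(z 0 y))) 0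
          = deriv (deriv (fun y : ℝ => zt 0 (-y))) 0 :=
        (hE.deriv).deriv_eq
      have eL : deriv (fun y : ℝ => -(z 0 y)) = fun y => -deriv (z 0) y :=
        funext fun y => deriv.neg
      have eR : deriv (fun y : ℝ => zt 0 (-y)) = fun y => -deriv (zt 0) (-y) :=
        funext fun y => deriv_comp_neg (zt 0) y
      rw [eL, eR] at key
      have kL : deriv (fun y : ℝ => -deriv (z 0) y) 0 = -deriv (deriv (z 0)) 0 := deriv.neg
      have kR : deriv (fun y : ℝ => -deriv (zt 0) (-y)) 0 = deriv (deriv (zt 0)) 0 := by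
        rw [deriv.fun_neg, deriv_comp_neg (deriv (zt 0)) 0, neg_zero, neg_neg]
      rw [kL, kR] at key
      linarith
  subst he1'
  refine ⟨rfl, rfl, ?_, ?_⟩
  · exact (hc.eventually heq).mono fun y hy => by
      have := hy.1; simpa using this
  · exact heq.mono fun p hp => by simpa using hp.2
end

section
/- Consider real unknowns X(k,l) (k+l=2,3), Y(k,l) (k+l=1), Z(k,l) (k+l=2) with Y(0,1) > 0 and Z(0,2) > 0, subject to the system: X(2,0)=X(1,1)=X(0,2)=0; X(3,0)+4Y(1,0)²+Z(2,0)² = a₂₀²; X(2,1)+2Y(0,1)Y(1,0)+Z(1,1)Z(2,0) = a₂₀a₁₁; X(1,2)+Y(0,1)²+Z(1,1)² = 1+a₁₁²; (1/2)X(2,1)+2Y(0,1)Y(1,0)+Z(1,1)Z(2,0) = a₂₀a₁₁; X(1,2)+Y(0,1)²+Z(1,1)²+Z(0,2)Z(2,0) = 1+a₁₁²+a₂₀a₀₂; X(0,3)+2Z(0,2)Z(1,1) = 2a₁₁a₀₂; Y(0,1)²+Z(1,1)² = 1+a₁₁²; Z(0,2)Z(1,1) = a₁₁a₀₂; Z(0,2)²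 = a₀₂², where a₂₀, a₁₁ ∈ ℝ and a₀₂ > 0. Then the unique solution is: all X(k,l) = 0, Y(1,0)=0, Y(0,1)=1, Z(2,0)=a₂₀, Z(1,1)=a₁₁, Z(0,2)=a₀₂. -/
/-- The unique second formal solution: the algebraic system obtained by matching the
second-order coefficients of the first fundamental form of a cross cap candidate with
a normalized Whitney metric forces `X(k,l) = 0`, `Y(1,0) = 0`, `Y(0,1) = 1`,
`Z(2,0) = a₂₀`, `Z(1,1) = a₁₁`, `Z(0,2) = a₀₂`. -/
theorem second_formal_solution_unique
    (a20 a11 a02 : ℝ) (ha02 : 0 < a02)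
    (X30 X21 X12 X03 X20 X11 X02 Y10 Y01 Z20 Z11 Z02 : ℝ)
    (hY01 : 0 < Y01) (hZ02 : 0 < Z02)
    (hX20 : X20 = 0) (hX11 : X11 = 0) (hX02 : X02 = 0)
    (e1 : X30 + 4 * Y10 ^ 2 + Z20 ^ 2 = a20 ^ 2)
    (e2 : X21 + 2 * Y01 * Y10 + Z11 * Z20 = a20 * a11)
    (e3 : X12 + Y01 ^ 2 + Z11 ^ 2 = 1 + a11 ^ 2)
    (e4 : (1 / 2) * X21 + 2 * Y01 * Y10 + Z11 * Z20 = a20 * a11)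
    (e5 : X12 + Y01 ^ 2 + Z11 ^ 2 + Z02 * Z20 = 1 + a11 ^ 2 + a20 * a02)
    (e6 : X03 + 2 * Z02 * Z11 = 2 * a11 * a02)
    (e7 : Y01 ^ 2 + Z11 ^ 2 = 1 + a11 ^ 2)
    (e8 : Z02 * Z11 = a11 * a02)
    (e9 : Z02 ^ 2 = a02 ^ 2) :
    X30 = 0 ∧ X21 = 0 ∧ X12 = 0 ∧ X03 = 0 ∧ Y10 = 0 ∧ Y01 = 1 ∧
      Z20 = a20 ∧ Z11 = a11 ∧ Z02 = a02 := by
  have hZ02' : Z02 = a02 := by nlinarith [sq_nonneg (Z02 - a02)]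
  have hZ11 : Z11 = a11 := by
    refine mul_left_cancel₀ (ne_of_gt ha02) ?_
    rw [hZ02'] at e8; linarith
  have h7 : Y01 ^ 2 = 1 := by rw [hZ11] at e7; linarith
  have hX12 : X12 = 0 := by rw [hZ11] at e3; linarith
  have hY01' : Y01 = 1 := by
    nlinarith [sq_nonneg (Y01 - 1), sq_nonneg (Y01 + 1)]
  have hX21 : X21 = 0 := by linarith
  have hZ20 : Z20 = a20 := by
    refine mul_left_cancel₀ (ne_of_gt ha02) ?_
    rw [hZ02', hX12, hY01', hZ11] at e5; linarith
  have hY10 : Y10 = 0 := by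
    rw [hX21, hY01', hZ11, hZ20] at e2; linarith
  have hX30 : X30 = 0 := by
    rw [hY10, hZ20] at e1; norm_num at e1; linarith
  have hX03 : X03 = 0 := by
    rw [hZ02', hZ11] at e6; linarith
  exact ⟨hX30, hX21, hX12, hX03, hY10, hY01', hZ20, hZ11, hZ02'⟩
end

section
/- Fix m ≥ 3 and constants a₂₀, a₁₁ ∈ ℝ, a₀₂ > 0. Consider real unknowns X_k (k = 0,…,m+1), Y_k (k = 0,…,m−1), Z_k (k = 0,…,m) subject to, for k = 0,…,m: X_{k+1} + (k+1)(m−k)Y_k + k a₂₀ Z_k + (m−k)a₁₁ Z_{k+1} = Ẽ_k; X_k + mk Y_{k−1} + k a₂₀ Z_{k−1} + m a₁₁ Z_k + (m−k) a₀₂ Z_{k+1} = F̃_k; k(k−1) Y_{k−2} + k a₁₁ Z_{k−1} + (m−k) a₀₂ Z_k = G̃_k, where out-of-range unknowns (negative indices, or indices exceeding the ranges) are interpreted as 0 and Ẽ_k, F̃_k, G̃_k are given real numbers. Then this linear system has a unique solution (X_k, Y_k, Z_k); explicitly, Z₀ = G̃₀/(m a₀₂), Z₁ = (G̃₁ − a₁₁Z₀)/((m−1)a₀₂),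 Z_{k+2} = (−a₂₀(k+2)Z_k + (k+2)(F̃_{k+1} − Ẽ_k) − k G̃_{k+2})/(a₀₂(2m−k−2)) for k = 0,…,m−2, and then the Y_k and X_k are determined by back-substitution. -/
/-- The linear system satisfied by the triple `(X, Y, Z)` of sequences of top-order
coefficients in the inductive step of the realization of a Whitney metric:
`X k` for `k = 0,…,m+1`, `Y k` for `k = 0,…,m−1`, `Z k` for `k = 0,…,m`
(out-of-range values are `0`), subject to the three families of equations for
`k = 0,…,m` with right-hand sides `Et, Ft, Gt`. -/
def SolvesSystem (m : ℕ) (a20 a11 a02 : ℝ) (Et Ft Gt : ℕ → ℝ)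
    (X Y Z : ℕ → ℝ) : Prop :=
  (∀ k : ℕ, m + 1 < k → X k = 0) ∧ (∀ k : ℕ, m - 1 < k → Y k = 0) ∧
  (∀ k : ℕ, m < k → Z k = 0) ∧
  ∀ k : ℕ, k ≤ m →
    (X (k + 1) + ((k : ℝ) + 1) * ((m : ℝ) - k) * Y k + (k : ℝ) * a20 * Z k
        + ((m : ℝ) - k) * a11 * Z (k + 1) = Et k) ∧
    (X k + (m : ℝ) * k * Y (k - 1) + (k : ℝ) * a20 * Z (k - 1) + (m : ℝ) * a11 * Z k
        + ((m : ℝ) - k) * a02 * Z (k + 1) = Ft k) ∧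
    ((k : ℝ) * ((k : ℝ) - 1) * Y (k - 2) + (k : ℝ) * a11 * Z (k - 1)
        + ((m : ℝ) - k) * a02 * Z k = Gt k)

/-!
Write `E k`, `F k`, `G k` for the three equations of index `k`.
Subtracting `E k` from `F (k + 1)` eliminates `X (k + 1)`; combining the difference with
`G (k + 2)` also eliminates `Y k` and leaves a two-step recursion for `Z` with leading
coefficient `a₀₂ (2m − k − 2) ≠ 0`, started by `G 0` and `G 1`. Once `Z` is known, `G (k + 2)`
gives `Y k` for `k ≤ m − 2`, the difference `F m − E (m − 1)` gives `Y (m − 1)`, and `F k`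
and `E m` give `X`. Conversely the values so defined satisfy every equation, since each `E k`
with `k < m` is `F (k + 1)` minus the difference used to eliminate `X (k + 1)`.
-/

/-- The equations `G 0`, `G 1` and `(k + 2) (F (k + 1) − E k) − k G (k + 2)`, which involve
only `Z`. -/
def SolvesZSystem (m : ℕ) (a20 a11 a02 : ℝ) (Et Ft Gt Z : ℕ → ℝ) : Prop :=
  (∀ k : ℕ, m < k → Z k = 0) ∧ (m : ℝ) * a02 * Z 0 = Gt 0 ∧
  a11 * Z 0 + ((m : ℝ) - 1) * a02 * Z 1 = Gt 1 ∧
  ∀ k : ℕ, k + 2 ≤ m → a02 * (2 * (m : ℝ) - k - 2) * Z (k + 2)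
    = -(a20 * ((k : ℝ) + 2) * Z k) + ((k : ℝ) + 2) * (Ft (k + 1) - Et k) - (k : ℝ) * Gt (k + 2)

noncomputable def zSolution (m : ℕ) (a20 a11 a02 : ℝ) (Et Ft Gt : ℕ → ℝ) : ℕ → ℝ
  | 0 => Gt 0 / ((m : ℝ) * a02)
  | 1 => (Gt 1 - a11 * zSolution m a20 a11 a02 Et Ft Gt 0) / (((m : ℝ) - 1) * a02)
  | k + 2 =>
    if k + 2 ≤ m then
      (-(a20 * ((k : ℝ) + 2) * zSolution m a20 a11 a02 Et Ft Gt k)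
          + ((k : ℝ) + 2) * (Ft (k + 1) - Et k) - (k : ℝ) * Gt (k + 2))
        / (a02 * (2 * (m : ℝ) - k - 2))
    else 0

/-- `Y k` is read off from `G (k + 2)`, except `Y (m - 1)`, which no `G` reaches and which is
read off from `F m − E (m − 1)`. -/
noncomputable def ySolution (m : ℕ) (a20 a11 a02 : ℝ) (Et Ft Gt Z : ℕ → ℝ) (k : ℕ) : ℝ :=
  if k + 2 ≤ m then
    (Gt (k + 2) - ((k : ℝ) + 2) * a11 * Z (k + 1) - ((m : ℝ) - k - 2) * a02 * Z (k + 2))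
      / (((k : ℝ) + 2) * ((k : ℝ) + 1))
  else if k + 1 = m then
    (Ft (k + 1) - Et k - a20 * Z k - (k : ℝ) * a11 * Z (k + 1)) / ((k : ℝ) * ((k : ℝ) + 1))
  else 0

noncomputable def xSolution (m : ℕ) (a20 a11 a02 : ℝ) (Et Ft Y Z : ℕ → ℝ) (k : ℕ) : ℝ :=
  if k ≤ m then
    Ft k - (m : ℝ) * k * Y (k - 1) - (k : ℝ) * a20 * Z (k - 1) - (m : ℝ) * a11 * Z k
      - ((m : ℝ) - k) * a02 * Z (k + 1)
  else if k = m + 1 then Et m - (m : ℝ) * a20 * Z m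
  else 0

section

variable {m : ℕ} {a20 a11 a02 : ℝ} {Et Ft Gt X Y Z Z' : ℕ → ℝ}

lemma two_mul_sub_sub_two_ne_zero {k : ℕ} (hk : k + 2 ≤ m) : 2 * (m : ℝ) - k - 2 ≠ 0 := by
  have : (k : ℝ) + 2 ≤ m := by exact_mod_cast hk
  have : (0 : ℝ) ≤ k := k.cast_nonneg
  linarith

namespace SolvesSystem

lemma g_add_two (h : SolvesSystem m a20 a11 a02 Et Ft Gt X Y Z) {k : ℕ} (hk : k + 2 ≤ m) :
    ((k : ℝ) + 2) * ((k : ℝ) + 1) * Y k + ((k : ℝ) + 2) * a11 * Z (k + 1)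
      + ((m : ℝ) - k - 2) * a02 * Z (k + 2) = Gt (k + 2) := by
  have hG := (h.2.2.2 (k + 2) hk).2.2
  rw [show k + 2 - 2 = k by omega, show k + 2 - 1 = k + 1 by omega] at hG
  push_cast at hG
  linear_combination hG

lemma f_succ_sub_e (h : SolvesSystem m a20 a11 a02 Et Ft Gt X Y Z) {k : ℕ} (hk : k + 1 ≤ m) :
    (k : ℝ) * ((k : ℝ) + 1) * Y k + a20 * Z k + (k : ℝ) * a11 * Z (k + 1)
      + ((m : ℝ) - k - 1) * a02 * Z (k + 2) = Ft (k + 1) - Et k := by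
  have hE := (h.2.2.2 k (by omega)).1
  have hF := (h.2.2.2 (k + 1) hk).2.1
  rw [Nat.add_sub_cancel] at hF
  push_cast at hF
  linear_combination hF - hE

lemma solvesZSystem (hm : 1 ≤ m) (h : SolvesSystem m a20 a11 a02 Et Ft Gt X Y Z) :
    SolvesZSystem m a20 a11 a02 Et Ft Gt Z := by
  refine ⟨h.2.2.1, ?_, ?_, fun k hk => ?_⟩
  · simpa using (h.2.2.2 0 m.zero_le).2.2
  · have hG := (h.2.2.2 1 hm).2.2
    norm_num at hG
    linear_combination hG
  · linear_combination ((k : ℝ) + 2) * h.f_succ_sub_e (k := k) (by omega)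
      - (k : ℝ) * h.g_add_two hk

lemma y_eq (hm : 2 ≤ m) (h : SolvesSystem m a20 a11 a02 Et Ft Gt X Y Z) :
    Y = ySolution m a20 a11 a02 Et Ft Gt Z := by
  funext k
  unfold ySolution
  split_ifs with hk hk'
  · rw [eq_div_iff (by positivity)]
    linear_combination h.g_add_two hk
  · have hD := h.f_succ_sub_e hk'.le
    have hk0 : (1 : ℝ) ≤ k := by exact_mod_cast (by omega : 1 ≤ k)
    subst hk'
    push_cast at hD
    rw [eq_div_iff (by positivity)]
    linear_combination hD
  · exact h.2.1 k (by omega)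

lemma x_eq (h : SolvesSystem m a20 a11 a02 Et Ft Gt X Y Z) :
    X = xSolution m a20 a11 a02 Et Ft Y Z := by
  funext k
  unfold xSolution
  split_ifs with hk hk'
  · linear_combination (h.2.2.2 k hk).2.1
  · subst hk'
    linear_combination (h.2.2.2 m le_rfl).1
  · exact h.1 k (by omega)

end SolvesSystem

namespace SolvesZSystem

lemma unique (hm : 2 ≤ m) (ha02 : a02 ≠ 0) (hZ : SolvesZSystem m a20 a11 a02 Et Ft Gt Z)
    (hZ' : SolvesZSystem m a20 a11 a02 Et Ft Gt Z') : Z = Z' := by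
  have hm' : (2 : ℝ) ≤ m := by exact_mod_cast hm
  have h0 : Z 0 = Z' 0 :=
    mul_left_cancel₀ (mul_ne_zero (by positivity) ha02) (hZ.2.1.trans hZ'.2.1.symm)
  funext k
  induction k using Nat.twoStepInduction with
  | zero => exact h0
  | one =>
    refine mul_left_cancel₀ (mul_ne_zero (by linarith : (m : ℝ) - 1 ≠ 0) ha02) ?_
    linear_combination hZ.2.2.1 - hZ'.2.2.1 - a11 * h0
  | more k ih _ =>
    by_cases hk : k + 2 ≤ m
    · refine mul_left_cancel₀ (mul_ne_zero ha02 (two_mul_sub_sub_two_ne_zero hk)) ?_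
      rw [hZ.2.2.2 k hk, hZ'.2.2.2 k hk, ih]
    · rw [hZ.1 _ (by omega), hZ'.1 _ (by omega)]

end SolvesZSystem

lemma solvesZSystem_zSolution (hm : 2 ≤ m) (ha02 : a02 ≠ 0) :
    SolvesZSystem m a20 a11 a02 Et Ft Gt (zSolution m a20 a11 a02 Et Ft Gt) := by
  have hm' : (2 : ℝ) ≤ m := by exact_mod_cast hm
  refine ⟨fun k hk => ?_, ?_, ?_, fun k hk => ?_⟩
  · obtain ⟨j, rfl⟩ : ∃ j, k = j + 2 := ⟨k - 2, by omega⟩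
    rw [zSolution, if_neg (by omega)]
  · rw [zSolution, mul_div_cancel₀ _ (mul_ne_zero (by positivity) ha02)]
  · rw [zSolution.eq_2, mul_div_cancel₀ _ (mul_ne_zero (by linarith : (m : ℝ) - 1 ≠ 0) ha02)]
    ring
  · rw [zSolution, if_pos hk,
      mul_div_cancel₀ _ (mul_ne_zero ha02 (two_mul_sub_sub_two_ne_zero hk))]

namespace SolvesZSystem

lemma ySolution_g (hZ : SolvesZSystem m a20 a11 a02 Et Ft Gt Z) {k : ℕ} (hk : k ≤ m) :
    (k : ℝ) * ((k : ℝ) - 1) * ySolution m a20 a11 a02 Et Ft Gt Z (k - 2)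
      + (k : ℝ) * a11 * Z (k - 1) + ((m : ℝ) - k) * a02 * Z k = Gt k := by
  match k with
  | 0 => simpa using hZ.2.1
  | 1 => simpa using hZ.2.2.1
  | k + 2 =>
    rw [ySolution, if_pos (by omega), Nat.add_sub_cancel, show k + 2 - 1 = k + 1 by omega]
    push_cast
    field_simp
    ring

lemma ySolution_f_succ_sub_e (hm : 2 ≤ m) (hZ : SolvesZSystem m a20 a11 a02 Et Ft Gt Z)
    {k : ℕ} (hk : k + 1 ≤ m) :
    (k : ℝ) * ((k : ℝ) + 1) * ySolution m a20 a11 a02 Et Ft Gt Z k + a20 * Z k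
      + (k : ℝ) * a11 * Z (k + 1) + ((m : ℝ) - k - 1) * a02 * Z (k + 2) = Ft (k + 1) - Et k := by
  by_cases hk2 : k + 2 ≤ m
  · have hG := hZ.ySolution_g hk2
    rw [Nat.add_sub_cancel, show k + 2 - 1 = k + 1 by omega] at hG
    push_cast at hG
    refine mul_left_cancel₀ (by positivity : (k : ℝ) + 2 ≠ 0) ?_
    linear_combination (k : ℝ) * hG + hZ.2.2.2 k hk2
  · have hkm : k + 1 = m := by omega
    have hk0 : (1 : ℝ) ≤ k := by exact_mod_cast (by omega : 1 ≤ k)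
    rw [ySolution, if_neg hk2, if_pos hkm, mul_div_cancel₀ _ (by positivity)]
    subst hkm
    push_cast
    ring

lemma solvesSystem (hm : 2 ≤ m) (hZ : SolvesZSystem m a20 a11 a02 Et Ft Gt Z) :
    SolvesSystem m a20 a11 a02 Et Ft Gt
      (xSolution m a20 a11 a02 Et Ft (ySolution m a20 a11 a02 Et Ft Gt Z) Z)
      (ySolution m a20 a11 a02 Et Ft Gt Z) Z := by
  refine ⟨fun k hk => ?_, fun k hk => ?_, hZ.1, fun k hk => ⟨?_, ?_, hZ.ySolution_g hk⟩⟩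
  · rw [xSolution, if_neg (by omega), if_neg (by omega)]
  · rw [ySolution, if_neg (by omega), if_neg (by omega)]
  · rcases hk.lt_or_eq with hk | rfl
    · rw [xSolution, if_pos (by omega), Nat.add_sub_cancel]
      push_cast
      linear_combination -hZ.ySolution_f_succ_sub_e hm hk
    · rw [xSolution, if_neg (by omega), if_pos rfl]
      ring
  · rw [xSolution, if_pos hk]
    ring

end SolvesZSystem

end

/-- For `m ≥ 3` and `a₀₂ > 0` the linear system for the top-order coefficients has a
unique solution, and every solution satisfies the explicit recursion for the `Z k`. -/
theorem mth_order_system_unique_solution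
    (m : ℕ) (hm : 3 ≤ m) (a20 a11 a02 : ℝ) (ha02 : 0 < a02) (Et Ft Gt : ℕ → ℝ) :
    (∃! W : (ℕ → ℝ) × (ℕ → ℝ) × (ℕ → ℝ),
      SolvesSystem m a20 a11 a02 Et Ft Gt W.1 W.2.1 W.2.2) ∧
    (∀ X Y Z : ℕ → ℝ, SolvesSystem m a20 a11 a02 Et Ft Gt X Y Z →
      Z 0 = Gt 0 / ((m : ℝ) * a02) ∧
      Z 1 = (Gt 1 - a11 * Z 0) / (((m : ℝ) - 1) * a02) ∧
      ∀ k : ℕ, k ≤ m - 2 →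
        Z (k + 2) = (-(a20 * ((k : ℝ) + 2) * Z k)
            + ((k : ℝ) + 2) * (Ft (k + 1) - Et k) - (k : ℝ) * Gt (k + 2))
          / (a02 * (2 * (m : ℝ) - k - 2))) := by
  have hm2 : 2 ≤ m := by omega
  have hm' : (3 : ℝ) ≤ m := by exact_mod_cast hm
  have hzSol : SolvesZSystem m a20 a11 a02 Et Ft Gt (zSolution m a20 a11 a02 Et Ft Gt) :=
    solvesZSystem_zSolution hm2 ha02.ne'
  refine ⟨⟨(_, _, _), hzSol.solvesSystem hm2, ?_⟩, fun X Y Z h => ?_⟩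
  · rintro ⟨X, Y, Z⟩ (h : SolvesSystem m a20 a11 a02 Et Ft Gt X Y Z)
    obtain rfl := (h.solvesZSystem (by omega)).unique hm2 ha02.ne' hzSol
    obtain rfl := h.y_eq hm2
    obtain rfl := h.x_eq
    rfl
  · obtain ⟨-, h0, h1, hrec⟩ := h.solvesZSystem (by omega)
    refine ⟨eq_div_of_mul_eq (mul_pos (by linarith) ha02).ne' ?_,
      eq_div_of_mul_eq (mul_pos (by linarith) ha02).ne' ?_, fun k hk => ?_⟩
    · linear_combination h0
    · linear_combination h1
    · have hk2 : k + 2 ≤ m := by omega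
      exact eq_div_of_mul_eq (mul_ne_zero ha02.ne' (two_mul_sub_sub_two_ne_zero hk2))
        (by linear_combination hrec k hk2)
end
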